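/- arXiv:1401.2290 — 2 statements merged into one kernel-verified Lean document; each statement's English description precedes it below -/
import Mathlib

section
/- Let X be any k-dimensional simplicial complex on a finite vertex set V with Z_{k−1}(X;ℝ) ≠ {0} (the (k−1)-skeleton need not be complete). Then λ(X) ≤ h(X). -/
open Finset

namespace HigherCheeger

variable {V : Type*} [DecidableEq V] [Fintype V] [LinearOrder V]

/-- An abstract simplicial complex: a family of finite subsets of `V`
closed under taking subsets. -/
def IsComplex (X : Finset (Finset V)) : Prop :=
  ∀ σ ∈ X, ∀ τ ⊆ σ, τ ∈ X

/-- `X` is `k`-dimensional: every face has at most `k+1` vertices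
and some face has exactly `k+1` vertices. -/
def IsDim (X : Finset (Finset V)) (k : ℕ) : Prop :=
  (∀ σ ∈ X, σ.card ≤ k + 1) ∧ ∃ σ ∈ X, σ.card = k + 1

/-- The faces of `X` of cardinality `c` (i.e. of dimension `c - 1`). -/
def faces (X : Finset (Finset V)) (c : ℕ) : Finset (Finset V) :=
  X.filter fun σ => σ.card = c

/-- `X` has complete `(k-1)`-skeleton: every subset of `V` of size at most `k` is a face. -/
def CompleteSkeleton (X : Finset (Finset V)) (k : ℕ) : Prop :=
  ∀ σ : Finset V, σ.card ≤ k → σ ∈ X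

/-- The `k`-dimensional completion `K(X)`. -/
def completion (X : Finset (Finset V)) (k : ℕ) : Finset (Finset V) :=
  X ∪ (Finset.univ.filter fun τ : Finset V => τ.card = k + 1 ∧ ∀ v ∈ τ, τ.erase v ∈ X)

/-- The complete `k`-dimensional complex `K_n^k` on the vertex set `V`. -/
def completeComplex (V : Type*) [DecidableEq V] [Fintype V] (k : ℕ) : Finset (Finset V) :=
  Finset.univ.filter fun σ : Finset V => σ.card ≤ k + 1

/-- The oriented incidence number `[τ:σ]` (with respect to the linear order on `V`):
`(-1)^j` if `σ = τ \ {v_j}` where `v_j` is the `j`-th smallest vertex of `τ`, and `0` otherwise. -/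
def incidence (τ σ : Finset V) : ℝ :=
  if σ ⊆ τ ∧ σ.card + 1 = τ.card then
    ∑ v ∈ τ \ σ, (-1 : ℝ) ^ (τ.filter fun w => w < v).card
  else 0

/-- The real coboundary operator `δ` applied to a cochain living on the faces of
cardinality `c`; the result lives on faces of cardinality `c + 1`. -/
def delta (X : Finset (Finset V)) (c : ℕ) (f : Finset V → ℝ) : Finset V → ℝ :=
  fun τ => ∑ σ ∈ faces X c, incidence τ σ * f σ

/-- The real boundary operator `∂` (the adjoint of `δ`) applied to a cochain living
on the faces of cardinality `c`; the result lives on faces of cardinality `c - 1`. -/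
def bdry (X : Finset (Finset V)) (c : ℕ) (f : Finset V → ℝ) : Finset V → ℝ :=
  fun σ => ∑ τ ∈ faces X c, incidence τ σ * f τ

/-- The inner product of two cochains on the faces of cardinality `c`. -/
def inn (X : Finset (Finset V)) (c : ℕ) (f g : Finset V → ℝ) : ℝ :=
  ∑ σ ∈ faces X c, f σ * g σ

/-- The upper Laplacian `L^up_{k-1} = ∂_k δ_{k-1}` acting on `(k-1)`-cochains
(functions on faces of cardinality `k`). -/
def lapUp (X : Finset (Finset V)) (k : ℕ) (f : Finset V → ℝ) : Finset V → ℝ :=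
  bdry X (k + 1) (delta X k f)

/-- The lower Laplacian `L^down_{k-1} = δ_{k-2} ∂_{k-1}` acting on `(k-1)`-cochains. -/
def lapDown (X : Finset (Finset V)) (k : ℕ) (f : Finset V → ℝ) : Finset V → ℝ :=
  delta X (k - 1) (bdry X k f)

/-- `f ∈ Z_{k-1}(X;ℝ) = ker ∂_{k-1}`. -/
def IsCycle (X : Finset (Finset V)) (k : ℕ) (f : Finset V → ℝ) : Prop :=
  ∀ σ : Finset V, bdry X k f σ = 0

/-- `f ∈ B^{k-1}(X;ℝ) = im δ_{k-2}` (as a cochain, i.e. on the `(k-1)`-faces). -/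
def IsCobdry (X : Finset (Finset V)) (k : ℕ) (f : Finset V → ℝ) : Prop :=
  ∃ g : Finset V → ℝ, ∀ σ ∈ faces X k, f σ = delta X (k - 1) g σ

/-- The spectral gap `λ(X)`: the minimum of the Rayleigh quotient
`⟨L^up_{k-1}(X) f, f⟩ / ⟨f, f⟩` over nonzero `f ∈ Z_{k-1}(X;ℝ)`. -/
noncomputable def spectralGap (X : Finset (Finset V)) (k : ℕ) : ℝ :=
  sInf {r : ℝ | ∃ f : Finset V → ℝ, IsCycle X k f ∧ inn X k f f ≠ 0 ∧
    r = inn X k (lapUp X k f) f / inn X k f f}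

/-- A partition of `V` into `m` (nonempty) parts. -/
def IsPartition {m : ℕ} (A : Fin m → Finset V) : Prop :=
  (∀ i, (A i).Nonempty) ∧ ∀ v : V, ∃! i, v ∈ A i

/-- The linear order on `V` is adapted to the family of parts `A`. -/
def OrderAdapted {m : ℕ} (A : Fin m → Finset V) : Prop :=
  ∀ i j : Fin m, i < j → ∀ v ∈ A i, ∀ w ∈ A j, v < w

/-- `F(A_0,…,A_k)`: the `k`-faces of `X` with exactly one vertex in each part. -/
def Fset (X : Finset (Finset V)) (k : ℕ) (A : Fin (k + 1) → Finset V) : Finset (Finset V) :=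
  (faces X (k + 1)).filter fun τ => ∀ i, (τ ∩ A i).card = 1

/-- `F^∂(A_0,…,A_k)`: the `(k+1)`-element members of `K(X)` with exactly one vertex
in each part. -/
def Fpar (X : Finset (Finset V)) (k : ℕ) (A : Fin (k + 1) → Finset V) : Finset (Finset V) :=
  (faces (completion X k) (k + 1)).filter fun τ => ∀ i, (τ ∩ A i).card = 1

/-- The value `|V|·|F(A_0,…,A_k)| / |F^∂(A_0,…,A_k)|` of a partition
(`⊤` if the denominator is `0`). -/
noncomputable def cheegerVal (X : Finset (Finset V)) (k : ℕ) (A : Fin (k + 1) → Finset V) :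
    EReal :=
  if (Fpar X k A).card = 0 then ⊤
  else (((Fintype.card V * (Fset X k A).card : ℝ) / ((Fpar X k A).card : ℝ) : ℝ) : EReal)

/-- The Cheeger constant `h(X)`. -/
noncomputable def cheeger (X : Finset (Finset V)) (k : ℕ) : EReal :=
  sInf {r : EReal | ∃ A : Fin (k + 1) → Finset V, IsPartition A ∧ r = cheegerVal X k A}

/-- `d(σ)`: the number of members of `F^∂(A_0,…,A_k)` containing `σ`. -/
def degPar (X : Finset (Finset V)) (k : ℕ) (A : Fin (k + 1) → Finset V) (σ : Finset V) : ℕ :=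
  ((Fpar X k A).filter fun τ => σ ⊆ τ).card

/-- `C(X)` (with respect to the partition `A`):
the maximum over `τ ∈ F^∂(A_0,…,A_k)` of `∑_{v ∈ τ} d(τ \ {v})`. -/
def Cconst (X : Finset (Finset V)) (k : ℕ) (A : Fin (k + 1) → Finset V) : ℕ :=
  (Fpar X k A).sup fun τ => ∑ v ∈ τ, degPar X k A (τ.erase v)

/-- The cochain associated to a partition `A`: `σ ↦ (-1)^l·|A_l|` if `A_l` is the unique
part disjoint from `σ`, and `0` otherwise. -/
def assocCochain {k : ℕ} (A : Fin (k + 1) → Finset V) (σ : Finset V) : ℝ :=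
  if (Finset.univ.filter fun l => σ ∩ A l = ∅).card = 1 then
    ∑ l ∈ Finset.univ.filter fun l => σ ∩ A l = ∅, (-1 : ℝ) ^ (l : ℕ) * ((A l).card : ℝ)
  else 0

/-- The `Z₂`-coboundary: a `(c-1)`-cochain `f` is sent to
`τ ↦ ∑_{v ∈ τ} f (τ \ {v})`. -/
def deltaZ2 (f : Finset V → ZMod 2) (τ : Finset V) : ZMod 2 :=
  ∑ v ∈ τ, f (τ.erase v)

/-- The support of the `Z₂`-coboundary of `f` in `X`: the faces of `X` of cardinality
`k + 1` on which the `Z₂`-coboundary of `f` is nonzero.  Its cardinality is `|δ_X f|`. -/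
def suppDelta (X : Finset (Finset V)) (k : ℕ) (f : Finset V → ZMod 2) : Finset (Finset V) :=
  (faces X (k + 1)).filter fun τ => deltaZ2 f τ ≠ 0

/-- `F(A_0,…,A_{k-1})`: the `(k-1)`-faces of `X` with exactly one vertex in each of
the `k` parts. -/
def FsetLow (X : Finset (Finset V)) (k : ℕ) (A : Fin k → Finset V) : Finset (Finset V) :=
  (faces X k).filter fun σ => ∀ i, (σ ∩ A i).card = 1

/-- The Cheeger-type constant `h'(X)`. -/
noncomputable def cheeger' (X : Finset (Finset V)) (k : ℕ) : EReal :=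
  sInf {r : EReal | ∃ (A : Fin k → Finset V) (f : Finset V → ZMod 2),
    IsPartition A ∧ (∀ σ, f σ ≠ 0 → σ ∈ FsetLow X k A) ∧
    r = if (suppDelta (completion X k) k f).card = 0 then (⊤ : EReal)
        else (((Fintype.card V * (suppDelta X k f).card : ℝ) /
              ((suppDelta (completion X k) k f).card : ℝ) : ℝ) : EReal)}

/-- The Hamming norm of a `Z₂`-cochain on the faces of cardinality `c`. -/
def hamming (X : Finset (Finset V)) (c : ℕ) (f : Finset V → ZMod 2) : ℕ :=
  ((faces X c).filter fun σ => f σ ≠ 0).card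

/-- `|[f]|`: the minimum Hamming norm of `f + δ_X g` over `g ∈ C^{k-2}(X;Z₂)`. -/
noncomputable def normClass (X : Finset (Finset V)) (k : ℕ) (f : Finset V → ZMod 2) : ℕ :=
  sInf {m : ℕ | ∃ g : Finset V → ZMod 2, m = hamming X k fun σ => f σ + deltaZ2 g σ}

/-- The coboundary expansion `φ(X) = min_f |δ_X f| / |[f]|` (quotients with denominator
`0` are `∞`). -/
noncomputable def phi (X : Finset (Finset V)) (k : ℕ) : EReal :=
  sInf {r : EReal | ∃ f : Finset V → ZMod 2,
    r = if normClass X k f = 0 then (⊤ : EReal)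
        else ((((suppDelta X k f).card : ℝ) / (normClass X k f : ℝ) : ℝ) : EReal)}

/-- `h̃(X) = min_f |V|·|δ_X f| / |δ_{K(X)} f|` (quotients with denominator `0` are `∞`). -/
noncomputable def htilde (X : Finset (Finset V)) (k : ℕ) : EReal :=
  sInf {r : EReal | ∃ f : Finset V → ZMod 2,
    r = if (suppDelta (completion X k) k f).card = 0 then (⊤ : EReal)
        else (((Fintype.card V * (suppDelta X k f).card : ℝ) /
              ((suppDelta (completion X k) k f).card : ℝ) : ℝ) : EReal)}


/-!
Fix a partition `V = A_0 ⊔ ⋯ ⊔ A_k`, seen as a colouring `c : V → Fin (k + 1)`. On a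
`(k-1)`-face meeting `k` distinct colours put `±|A_i|`, where `i` is the missing colour, with signs
chosen so that `δ` of this cochain is `±|V|` on every rainbow `k`-set (one vertex of each colour)
whose facets lie in `X`, and `0` on every other such set. Projecting it orthogonally onto
`Z_{k-1} = (B^{k-1})ᗮ` changes it by a coboundary, which `δ` kills, so the projection `f` is a
cycle with `‖δ f‖² = |V|² |F|`. Cauchy–Schwarz on each `τ ∈ F^∂`, with the weights `|A_{c v}|`,
gives `|V| ≤ ∑_{v ∈ τ} f(τ ∖ v)² / |A_{c v}|`; a `(k-1)`-face missing colour `i` lies in at most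
`|A_i|` members of `F^∂`, so summing over `F^∂` gives `|V| |F^∂| ≤ ‖f‖²`. Hence
`λ(X) ≤ ‖δ f‖² / ‖f‖² ≤ |V| |F| / |F^∂|`.
-/

theorem inn_self_nonneg {V : Type*} (X : Finset (Finset V)) (c : ℕ) (f : Finset V → ℝ) :
    0 ≤ inn X c f f :=
  sum_nonneg fun σ _ => mul_self_nonneg (f σ)

section Faces

variable {V : Type*} [DecidableEq V]

theorem faces_filter_subset_eq_image_erase (X : Finset (Finset V)) {c : ℕ} {τ : Finset V}
    (hτ : τ.card = c + 1) (hfacets : ∀ v ∈ τ, τ.erase v ∈ X) :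
    {σ ∈ faces X c | σ ⊆ τ} = τ.image τ.erase := by
  ext σ
  simp only [faces, mem_filter, mem_image]
  constructor
  · rintro ⟨⟨-, hσ⟩, hστ⟩
    obtain ⟨v, hv, rfl⟩ := exists_eq_insert_iff.mpr ⟨hστ, by omega⟩
    exact ⟨v, mem_insert_self v σ, erase_insert hv⟩
  · rintro ⟨v, hv, rfl⟩
    exact ⟨⟨hfacets v hv, by rw [card_erase_of_mem hv, hτ]; rfl⟩, erase_subset v τ⟩

theorem sum_erase_eq_sum_faces (X : Finset (Finset V)) {c : ℕ} {τ : Finset V}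
    (hτ : τ.card = c + 1) (hfacets : ∀ v ∈ τ, τ.erase v ∈ X) {M : Type*} [AddCommMonoid M]
    (F : Finset V → M) :
    ∑ v ∈ τ, F (τ.erase v) = ∑ σ ∈ faces X c with σ ⊆ τ, F σ := by
  rw [faces_filter_subset_eq_image_erase X hτ hfacets, sum_image]
  intro v hv w _ h
  by_contra hvw
  exact (mem_erase.mp (h ▸ mem_erase.mpr ⟨hvw, hv⟩ : v ∈ τ.erase v)).1 rfl

theorem card_filter_eq_card_filter_erase_add {τ : Finset V} {v : V} (hv : v ∈ τ)
    (p : V → Prop) [DecidablePred p] :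
    #{x ∈ τ | p x} = #{x ∈ τ.erase v | p x} + if p v then 1 else 0 := by
  rw [filter_erase]
  split_ifs with h
  · exact (card_erase_add_one (mem_filter.mpr ⟨hv, h⟩)).symm
  · rw [erase_eq_of_notMem fun h' => h (mem_filter.mp h').2, add_zero]

theorem image_erase_eq_of_mem_of_eq {β : Type*} [DecidableEq β] {c : V → β} {τ : Finset V}
    {u w : V} (hw : w ∈ τ.erase u) (hc : c w = c u) : (τ.erase u).image c = τ.image c := by
  refine (image_subset_image (erase_subset u τ)).antisymm fun i hi => ?_
  obtain ⟨x, hx, rfl⟩ := mem_image.mp hi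
  by_cases hxu : x = u
  · exact mem_image.mpr ⟨w, hw, hxu ▸ hc⟩
  · exact mem_image_of_mem c (mem_erase.mpr ⟨hxu, hx⟩)

theorem IsComplex.erase_mem_of_mem_completion [Fintype V] {X : Finset (Finset V)}
    (hX : IsComplex X) {k : ℕ} {τ : Finset V} (hτ : τ ∈ completion X k) :
    ∀ v ∈ τ, τ.erase v ∈ X := by
  rcases mem_union.mp hτ with h | h
  · exact fun v _ => hX τ h _ (erase_subset v τ)
  · exact (mem_filter.mp h).2.2

end Faces

section Incidence

variable {V : Type*} [DecidableEq V] [LinearOrder V]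

theorem incidence_erase {τ : Finset V} {v : V} (hv : v ∈ τ) :
    incidence τ (τ.erase v) = (-1) ^ #{w ∈ τ | w < v} := by
  have hcard : (τ.erase v).card + 1 = τ.card := card_erase_add_one hv
  rw [incidence, if_pos ⟨erase_subset v τ, hcard⟩, sdiff_erase_self hv, sum_singleton]

theorem incidence_of_not_isFacet {τ σ : Finset V} (h : ¬(σ ⊆ τ ∧ σ.card + 1 = τ.card)) :
    incidence τ σ = 0 := by
  rw [incidence, if_neg h]

theorem incidence_erase_sq {τ : Finset V} {v : V} (hv : v ∈ τ) :
    incidence τ (τ.erase v) ^ 2 = 1 := by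
  rw [incidence_erase hv, ← pow_mul, pow_mul', neg_one_sq, one_pow]

theorem delta_eq_sum_erase (X : Finset (Finset V)) {c : ℕ} (f : Finset V → ℝ) {τ : Finset V}
    (hτ : τ.card = c + 1) (hfacets : ∀ v ∈ τ, τ.erase v ∈ X) :
    delta X c f τ = ∑ v ∈ τ, incidence τ (τ.erase v) * f (τ.erase v) := by
  rw [sum_erase_eq_sum_faces X hτ hfacets (fun σ => incidence τ σ * f σ), delta,
    sum_filter_of_ne]
  intro σ _ h
  by_contra hστ
  exact h (by rw [incidence_of_not_isFacet (fun h' => hστ h'.1), zero_mul])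

theorem incidence_mul_incidence_add_swap_eq_zero {τ : Finset V} {u w : V} (hu : u ∈ τ)
    (hw : w ∈ τ) (hlt : u < w) :
    incidence τ (τ.erase u) * incidence (τ.erase u) ((τ.erase u).erase w)
      + incidence τ (τ.erase w) * incidence (τ.erase w) ((τ.erase w).erase u) = 0 := by
  have hwu : w ∈ τ.erase u := mem_erase.mpr ⟨hlt.ne', hw⟩
  have huw : u ∈ τ.erase w := mem_erase.mpr ⟨hlt.ne, hu⟩
  rw [incidence_erase hu, incidence_erase hw, incidence_erase hwu, incidence_erase huw]
  have hbelow_w : #{x ∈ τ.erase u | x < w} + 1 = #{x ∈ τ | x < w} := by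
    rw [filter_erase]; exact card_erase_add_one (mem_filter.mpr ⟨hu, hlt⟩)
  have hbelow_u : #{x ∈ τ.erase w | x < u} = #{x ∈ τ | x < u} := by
    rw [filter_erase, erase_eq_of_notMem]; simp [hlt.le]
  rw [← hbelow_w, hbelow_u]
  ring

/-- `∂ ∘ ∂ = 0` at the level of incidence numbers. -/
theorem sum_incidence_mul_incidence_eq_zero (τ ρ : Finset V) :
    ∑ v ∈ τ, incidence τ (τ.erase v) * incidence (τ.erase v) ρ = 0 := by
  by_cases hρ : ρ ⊆ τ ∧ ρ.card + 2 = τ.card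
  · obtain ⟨u, w, huw, hτρ⟩ := card_eq_two.mp
      (show #(τ \ ρ) = 2 by rw [card_sdiff_of_subset hρ.1]; omega)
    have hu : u ∈ τ := (mem_sdiff.mp (hτρ ▸ mem_insert_self u {w})).1
    have hw : w ∈ τ := (mem_sdiff.mp (hτρ ▸ mem_insert_of_mem (mem_singleton_self w))).1
    have hρ_eq : ρ = (τ.erase u).erase w := by
      rw [← Finset.sdiff_sdiff_eq_self hρ.1, hτρ]
      ext
      simp only [mem_sdiff, mem_insert, mem_singleton, mem_erase]
      tauto
    rw [← sum_subset (insert_subset hu (singleton_subset_iff.mpr hw)), sum_pair huw]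
    · rcases huw.lt_or_gt with hlt | hlt
      · rw [hρ_eq, erase_right_comm]
        simpa [erase_right_comm] using incidence_mul_incidence_add_swap_eq_zero hu hw hlt
      · rw [hρ_eq, add_comm]
        simpa [erase_right_comm] using incidence_mul_incidence_add_swap_eq_zero hw hu hlt
    · intro v hv hvuw
      have hvρ : v ∈ ρ := by
        by_contra h; exact hvuw (hτρ ▸ mem_sdiff.mpr ⟨hv, h⟩)
      rw [incidence_of_not_isFacet (fun h => (mem_erase.mp (h.1 hvρ)).1 rfl), mul_zero]
  · refine sum_eq_zero fun v hv => ?_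
    rw [incidence_of_not_isFacet (τ := τ.erase v), mul_zero]
    rintro ⟨hsub, hcard⟩
    rw [card_erase_of_mem hv] at hcard
    exact hρ ⟨hsub.trans (erase_subset v τ), by have := card_pos.mpr ⟨v, hv⟩; omega⟩

theorem inn_lapUp_self (X : Finset (Finset V)) (k : ℕ) (f : Finset V → ℝ) :
    inn X k (lapUp X k f) f = inn X (k + 1) (delta X k f) (delta X k f) := by
  simp only [inn, lapUp, bdry, sum_mul]
  rw [sum_comm]
  refine sum_congr rfl fun τ _ => ?_
  rw [delta, mul_sum]
  exact sum_congr rfl fun σ _ => by ring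

theorem spectralGap_le {X : Finset (Finset V)} {k : ℕ} {f : Finset V → ℝ}
    (hf : IsCycle X k f) (hff : inn X k f f ≠ 0) :
    spectralGap X k ≤ inn X k (lapUp X k f) f / inn X k f f := by
  refine csInf_le ⟨0, ?_⟩ ⟨f, hf, hff, rfl⟩
  rintro _ ⟨f', -, -, rfl⟩
  rw [inn_lapUp_self]
  exact div_nonneg (inn_self_nonneg _ _ _) (inn_self_nonneg _ _ _)

variable [Fintype V]

/-- Project `g` onto `Z_{k-1} = (B^{k-1})ᗮ`: this changes `g` by a coboundary, which `δ` kills on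
every `(k+1)`-set whose facets are in `X` because `δ ∘ δ = 0`. -/
theorem exists_isCycle_delta_eq (X : Finset (Finset V)) (k : ℕ) (g : Finset V → ℝ) :
    ∃ f, IsCycle X k f ∧ ∀ τ : Finset V, τ.card = k + 1 → (∀ v ∈ τ, τ.erase v ∈ X) →
      delta X k f τ = delta X k g τ := by
  let vec : (Finset V → ℝ) → EuclideanSpace ℝ (Finset V) := fun φ =>
    WithLp.toLp 2 fun σ => if σ ∈ faces X k then φ σ else 0
  have inner_vec (φ : Finset V → ℝ) (x : EuclideanSpace ℝ (Finset V)) :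
      inner ℝ (vec φ) x = ∑ σ ∈ faces X k, φ σ * x σ := by
    simp only [vec, PiLp.inner_apply, RCLike.inner_apply, conj_trivial, ite_mul, zero_mul,
      sum_ite_mem, univ_inter, mul_comm]
  let U := Submodule.span ℝ (Set.range fun ρ => vec (incidence · ρ))
  obtain ⟨y, hy, z, hz, hg⟩ := U.exists_add_mem_mem_orthogonal (WithLp.toLp 2 g)
  refine ⟨fun σ => z σ, fun ρ => ?_, fun τ hτ hfacets => ?_⟩
  · rw [bdry, ← inner_vec]
    exact Submodule.inner_right_of_mem_orthogonal
      (Submodule.subset_span (Set.mem_range_self ρ)) hz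
  · have hδy : inner ℝ (vec (incidence τ)) y = 0 := by
      refine (Submodule.span_le (p := LinearMap.ker (innerₛₗ ℝ (vec (incidence τ)))).mpr ?_ hy)
      rintro _ ⟨ρ, rfl⟩
      simp only [SetLike.mem_coe, LinearMap.mem_ker, innerₛₗ_apply_apply, inner_vec]
      rw [← sum_incidence_mul_incidence_eq_zero τ ρ,
        ← delta_eq_sum_erase X (incidence · ρ) hτ hfacets]
      exact sum_congr rfl fun σ hσ => by simp [vec, hσ]
    have hsum := congrArg (inner ℝ (vec (incidence τ))) hg
    rw [inner_add_right, hδy, zero_add, inner_vec, inner_vec] at hsum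
    exact hsum.symm

end Incidence

section Rainbow

variable {V : Type*} {m : ℕ} (c : V → Fin m)

def IsRainbow (τ : Finset V) : Prop :=
  ∀ i, #{x ∈ τ | c x = i} = 1

instance : DecidablePred (IsRainbow c) := fun τ =>
  inferInstanceAs (Decidable (∀ i, #{x ∈ τ | c x = i} = 1))

variable {c}

theorem IsPartition.exists_eq_fiber [Fintype V] {A : Fin m → Finset V} (hA : IsPartition A) :
    ∃ c : V → Fin m, A = fun i => ({x | c x = i} : Finset V) := by
  choose c hc hc_unique using hA.2
  refine ⟨c, funext fun i => ext fun v => ⟨fun hv => ?_, fun hv => ?_⟩⟩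
  · simpa using (hc_unique v i hv).symm
  · simpa [← (mem_filter.mp hv).2] using hc v

theorem card_inter_fiber_eq_one_iff [Fintype V] [DecidableEq V] {τ : Finset V} :
    (∀ i, (τ ∩ ({x | c x = i} : Finset V)).card = 1) ↔ IsRainbow c τ := by
  simp only [IsRainbow, inter_filter, inter_univ]

namespace IsRainbow

variable {τ : Finset V} (hτ : IsRainbow c τ)
include hτ

theorem card_eq : τ.card = m := by
  rw [card_eq_sum_card_fiberwise (f := c) (t := univ) fun _ _ => mem_univ _]
  simp [hτ _]

theorem injOn : Set.InjOn c τ := fun x hx y hy hxy =>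
  card_le_one.mp (hτ (c x)).le x (mem_filter.mpr ⟨hx, rfl⟩) y (mem_filter.mpr ⟨hy, hxy.symm⟩)

theorem image_eq_univ : τ.image c = univ :=
  eq_univ_of_forall fun i => by
    obtain ⟨x, hx⟩ := card_pos.mp (hτ i ▸ Nat.one_pos)
    exact mem_image.mpr ⟨x, (mem_filter.mp hx).1, (mem_filter.mp hx).2⟩

theorem sum_comp {M : Type*} [AddCommMonoid M] (a : Fin m → M) :
    ∑ v ∈ τ, a (c v) = ∑ i, a i := by
  rw [← hτ.image_eq_univ, sum_image hτ.injOn]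

theorem card_filter_lt (v : V) : #{x ∈ τ | c x < c v} = c v := by
  rw [← card_image_of_injOn (hτ.injOn.mono (filter_subset _ τ)),
    ← filter_image (p := (· < c v)), hτ.image_eq_univ, filter_gt_eq_Iio, Fin.card_Iio]

theorem image_erase [DecidableEq V] {v : V} (hv : v ∈ τ) :
    (τ.erase v).image c = univ.erase (c v) := by
  ext i
  simp only [mem_image, mem_erase, mem_univ, and_true]
  constructor
  · rintro ⟨x, ⟨hxv, hx⟩, rfl⟩ h
    exact hxv (hτ.injOn hx hv h)
  · intro hi
    obtain ⟨x, hx, rfl⟩ := mem_image.mp (hτ.image_eq_univ ▸ mem_univ i : i ∈ τ.image c)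
    exact ⟨x, ⟨fun h => hi (h ▸ rfl), hx⟩, rfl⟩

end IsRainbow

theorem isRainbow_of_injOn {τ : Finset V} (hτ : τ.card = m) (hc : Set.InjOn c τ) :
    IsRainbow c τ := by
  have himage : τ.image c = univ :=
    eq_univ_of_card _ (by rw [card_image_of_injOn hc, hτ, Fintype.card_fin])
  intro i
  refine le_antisymm (card_le_one.mpr fun x hx y hy => ?_) (card_pos.mpr ?_)
  · obtain ⟨⟨hx, hcx⟩, ⟨hy, hcy⟩⟩ := And.intro (mem_filter.mp hx) (mem_filter.mp hy)
    exact hc hx hy (hcx.trans hcy.symm)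
  · obtain ⟨x, hx, rfl⟩ := mem_image.mp (himage ▸ mem_univ i : i ∈ τ.image c)
    exact ⟨x, mem_filter.mpr ⟨hx, rfl⟩⟩

variable [Fintype V] (c)

def missingCount (σ : Finset V) : ℕ :=
  #{x | c x ∉ σ.image c}

variable {c}

theorem IsRainbow.missingCount_erase [DecidableEq V] {τ : Finset V} (hτ : IsRainbow c τ)
    {v : V} (hv : v ∈ τ) : missingCount c (τ.erase v) = #{x | c x = c v} := by
  simp [missingCount, hτ.image_erase hv]

theorem IsRainbow.sum_missingCount_erase [DecidableEq V] {τ : Finset V} (hτ : IsRainbow c τ) :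
    ∑ v ∈ τ, missingCount c (τ.erase v) = Fintype.card V := by
  rw [sum_congr rfl fun v hv => hτ.missingCount_erase hv,
    hτ.sum_comp fun i => #({x | c x = i} : Finset V), ← card_univ,
    card_eq_sum_card_fiberwise (f := c) (t := univ) fun _ _ => mem_univ _]

theorem card_filter_superset_le_missingCount [DecidableEq V] {T : Finset (Finset V)}
    {σ : Finset V} (hT : ∀ τ ∈ T, IsRainbow c τ ∧ τ.card = σ.card + 1) :
    #{τ ∈ T | σ ⊆ τ} ≤ missingCount c σ := by
  refine (card_le_card fun τ hτ => ?_).trans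
    (card_image_le (f := (insert · σ)) (s := univ.filter fun x => c x ∉ σ.image c))
  obtain ⟨hτT, hστ⟩ := mem_filter.mp hτ
  obtain ⟨hrainbow, hcard⟩ := hT τ hτT
  obtain ⟨x, hxσ, rfl⟩ := exists_eq_insert_iff.mpr ⟨hστ, hcard.symm⟩
  refine mem_image.mpr ⟨x, mem_filter.mpr ⟨mem_univ x, fun hx => ?_⟩, rfl⟩
  obtain ⟨y, hy, hyx⟩ := mem_image.mp hx
  exact hxσ (hrainbow.injOn (mem_insert_of_mem hy) (mem_insert_self x σ) hyx ▸ hy)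

end Rainbow

section Inversions

variable {V : Type*} [LinearOrder V] {m : ℕ}

def invCount (c : V → Fin m) (σ : Finset V) : ℕ :=
  ∑ w ∈ σ, #{x ∈ σ | x < w ∧ c w < c x}

variable (c : V → Fin m) [DecidableEq V]

theorem invCount_erase {τ : Finset V} {v : V} (hv : v ∈ τ) :
    invCount c τ = invCount c (τ.erase v) + #{x ∈ τ | x < v ∧ c v < c x}
      + #{x ∈ τ | v < x ∧ c x < c v} := by
  have hsum : ∑ w ∈ τ.erase v, #{x ∈ τ | x < w ∧ c w < c x}
      = invCount c (τ.erase v) + #{x ∈ τ | v < x ∧ c x < c v} := by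
    rw [sum_congr rfl fun w _ => card_filter_eq_card_filter_erase_add hv _, sum_add_distrib,
      sum_boole, Nat.cast_id, invCount]
    congr 2
    rw [filter_erase, erase_eq_of_notMem (by simp)]
  rw [invCount, ← add_sum_erase _ _ hv, hsum]
  ring

theorem incidence_erase_mul_neg_one_pow_invCount {τ : Finset V} {v : V} (hv : v ∈ τ) :
    incidence τ (τ.erase v) * (-1) ^ invCount c (τ.erase v)
      = (-1) ^ (invCount c τ + #{x ∈ τ | c x < c v} + #{x ∈ τ | x < v ∧ c x = c v}) := by
  have hcount : #{x ∈ τ | x < v} + #{x ∈ τ | v < x ∧ c x < c v}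
      = #{x ∈ τ | x < v ∧ c v < c x} + #{x ∈ τ | c x < c v}
        + #{x ∈ τ | x < v ∧ c x = c v} := by
    simp only [card_filter, ← sum_add_distrib]
    refine sum_congr rfl fun x _ => ?_
    grind
  have hinv := invCount_erase c hv
  rw [incidence_erase hv, ← pow_add,
    show invCount c τ + #{x ∈ τ | c x < c v} + #{x ∈ τ | x < v ∧ c x = c v}
      = #{x ∈ τ | x < v} + invCount c (τ.erase v) + 2 * #{x ∈ τ | v < x ∧ c x < c v} by omega,
    pow_add _ _ (2 * _), pow_mul, neg_one_sq, one_pow, mul_one]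

end Inversions

section TestCochain

variable {V : Type*} [LinearOrder V] {k : ℕ} (c : V → Fin (k + 1))

/-- On a `k`-set `σ` with `k` distinct colours this is `±` the weight of the one missing colour.
The sign `(-1) ^ invCount c σ` makes up for the vertex order not being adapted to the colouring,
so that `δ` of this cochain is `±∑ a` on rainbow sets and vanishes elsewhere. -/
def testCochain (a : Fin (k + 1) → ℝ) (σ : Finset V) : ℝ :=
  if σ.card = k ∧ (σ.image c).card = k then
    (-1) ^ invCount c σ * ∑ i ∈ univ \ σ.image c, (-1) ^ (i : ℕ) * a i
  else 0

variable {c} (a : Fin (k + 1) → ℝ)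

theorem testCochain_eq_zero_of_not_injOn {σ : Finset V} (h : ¬Set.InjOn c σ) :
    testCochain c a σ = 0 :=
  if_neg fun ⟨hσ, himage⟩ => h (card_image_iff.mp (himage.trans hσ.symm))

variable [DecidableEq V]

theorem IsRainbow.incidence_mul_testCochain_erase {τ : Finset V} (hτ : IsRainbow c τ) {v : V}
    (hv : v ∈ τ) :
    incidence τ (τ.erase v) * testCochain c a (τ.erase v) = (-1) ^ invCount c τ * a (c v) := by
  have hcard : (τ.erase v).card = k := by rw [card_erase_of_mem hv, hτ.card_eq]; rfl
  have himage := hτ.image_erase hv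
  have himage_card : ((τ.erase v).image c).card = k := by simp [himage]
  have hsame : #{x ∈ τ | x < v ∧ c x = c v} = 0 :=
    card_eq_zero.mpr <| filter_false_of_mem fun x hx ⟨hlt, hcx⟩ => hlt.ne (hτ.injOn hx hv hcx)
  have hsign := incidence_erase_mul_neg_one_pow_invCount c hv
  rw [hτ.card_filter_lt, hsame, add_zero, pow_add] at hsign
  have hsq : ((-1 : ℝ) ^ (c v : ℕ)) ^ 2 = 1 := by rw [← pow_mul, pow_mul', neg_one_sq, one_pow]
  rw [testCochain, if_pos ⟨hcard, himage_card⟩, himage, sdiff_erase_self (mem_univ _),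
    sum_singleton, ← mul_assoc, hsign]
  linear_combination (-1) ^ invCount c τ * a (c v) * hsq

theorem incidence_mul_testCochain_add_swap_eq_zero {τ : Finset V} (hτ : τ.card = k + 1)
    {u w : V} (hu : u ∈ τ) (hw : w ∈ τ) (hlt : u < w) (hc : c u = c w) :
    incidence τ (τ.erase u) * testCochain c a (τ.erase u)
      + incidence τ (τ.erase w) * testCochain c a (τ.erase w) = 0 := by
  have hcard_u : (τ.erase u).card = k := by rw [card_erase_of_mem hu, hτ]; rfl
  have hcard_w : (τ.erase w).card = k := by rw [card_erase_of_mem hw, hτ]; rfl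
  have himage_u := image_erase_eq_of_mem_of_eq (mem_erase.mpr ⟨hlt.ne', hw⟩) hc.symm
  have himage_w := image_erase_eq_of_mem_of_eq (mem_erase.mpr ⟨hlt.ne, hu⟩) hc
  by_cases himage : (τ.image c).card = k
  swap
  · simp only [testCochain, hcard_u, hcard_w, himage_u, himage_w, himage, and_false,
      if_false, mul_zero, add_zero]
  have hinj_w : Set.InjOn c (τ.erase w) :=
    card_image_iff.mp (by rw [himage_w, himage, hcard_w])
  have hfiber : ∀ x ∈ τ, c x = c u → x ≠ w → x = u := fun x hx hcx hxw =>
    hinj_w (mem_erase.mpr ⟨hxw, hx⟩) (mem_erase.mpr ⟨hlt.ne, hu⟩) hcx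
  have hsame_u : #{x ∈ τ | x < u ∧ c x = c u} = 0 :=
    card_eq_zero.mpr <| filter_false_of_mem fun x hx ⟨hxu, hcx⟩ =>
      hxu.ne (hfiber x hx hcx (hxu.trans hlt).ne)
  have hsame_w : #{x ∈ τ | x < w ∧ c x = c w} = 1 :=
    card_eq_one.mpr ⟨u, ext fun x => by
      simp only [mem_filter, mem_singleton]
      exact ⟨fun ⟨hx, hxw, hcx⟩ => hfiber x hx (hcx.trans hc.symm) hxw.ne,
        fun hxu => hxu ▸ ⟨hu, hlt, hc⟩⟩⟩
  simp only [testCochain, hcard_u, hcard_w, himage_u, himage_w, himage, and_self, if_true]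
  rw [← mul_assoc, ← mul_assoc, incidence_erase_mul_neg_one_pow_invCount c hu,
    incidence_erase_mul_neg_one_pow_invCount c hw, hsame_u, hsame_w, hc, pow_succ]
  ring

theorem delta_testCochain (X : Finset (Finset V)) {τ : Finset V} (hτ : τ.card = k + 1)
    (hfacets : ∀ v ∈ τ, τ.erase v ∈ X) :
    delta X k (testCochain c a) τ
      = if IsRainbow c τ then (-1) ^ invCount c τ * ∑ i, a i else 0 := by
  rw [delta_eq_sum_erase X _ hτ hfacets]
  split_ifs with hrainbow
  · rw [sum_congr rfl fun v hv => hrainbow.incidence_mul_testCochain_erase a hv, ← mul_sum,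
      hrainbow.sum_comp]
  obtain ⟨u, hu, w, hw, hlt, hc⟩ : ∃ u ∈ τ, ∃ w ∈ τ, u < w ∧ c u = c w := by
    have hninj : ¬Set.InjOn c τ := fun h => hrainbow (isRainbow_of_injOn (by simpa) h)
    simp only [Set.InjOn, not_forall] at hninj
    obtain ⟨u, hu, w, hw, hc, hne⟩ := hninj
    rcases lt_or_gt_of_ne hne with hlt | hlt
    exacts [⟨u, hu, w, hw, hlt, hc⟩, ⟨w, hw, u, hu, hlt, hc.symm⟩]
  rw [← sum_subset (insert_subset hu (singleton_subset_iff.mpr hw)), sum_pair hlt.ne,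
    incidence_mul_testCochain_add_swap_eq_zero a hτ hu hw hlt hc]
  intro v hv hvuw
  simp only [mem_insert, mem_singleton, not_or] at hvuw
  have hninj : ¬Set.InjOn c (τ.erase v) := fun h =>
    hlt.ne (h (mem_erase.mpr ⟨Ne.symm hvuw.1, hu⟩) (mem_erase.mpr ⟨Ne.symm hvuw.2, hw⟩) hc)
  rw [testCochain_eq_zero_of_not_injOn a hninj, mul_zero]

end TestCochain

section Estimate

variable {V : Type*} [DecidableEq V] [Fintype V] {k : ℕ} {c : V → Fin (k + 1)}

/-- Cauchy–Schwarz with the weights `missingCount c (τ.erase v) = |A_{c v}|`, which sum to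
`|V|`. -/
theorem IsRainbow.sq_delta_le [LinearOrder V] (X : Finset (Finset V)) {τ : Finset V}
    (hτ : IsRainbow c τ) (hfacets : ∀ v ∈ τ, τ.erase v ∈ X) (f : Finset V → ℝ) :
    delta X k f τ ^ 2
      ≤ Fintype.card V * ∑ v ∈ τ, f (τ.erase v) ^ 2 / missingCount c (τ.erase v) := by
  have hweight_pos : ∀ v ∈ τ, (0 : ℝ) < missingCount c (τ.erase v) := fun v hv => by
    rw [hτ.missingCount_erase hv]
    exact Nat.cast_pos.mpr (card_pos.mpr ⟨v, by simp⟩)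
  have hcs := sq_sum_div_le_sum_sq_div τ (fun v => incidence τ (τ.erase v) * f (τ.erase v))
    hweight_pos
  have hweight_sum : ∑ v ∈ τ, (missingCount c (τ.erase v) : ℝ) = Fintype.card V := by
    exact_mod_cast hτ.sum_missingCount_erase
  have hcard_pos : (0 : ℝ) < Fintype.card V := by
    rw [← hweight_sum]
    exact sum_pos hweight_pos (card_pos.mp (by rw [hτ.card_eq]; exact k.succ_pos))
  rw [hweight_sum, div_le_iff₀' hcard_pos, ← delta_eq_sum_erase X f hτ.card_eq hfacets] at hcs
  rwa [sum_congr rfl fun v hv => by rw [mul_pow, incidence_erase_sq hv, one_mul]] at hcs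

/-- Each `σ` is a facet of at most `missingCount c σ` rainbow sets, so the weights
`1 / missingCount c σ` make the double count of facets an underestimate. -/
theorem sum_sum_erase_div_missingCount_le (X : Finset (Finset V)) {T : Finset (Finset V)}
    (hT : ∀ τ ∈ T, IsRainbow c τ ∧ ∀ v ∈ τ, τ.erase v ∈ X) {h : Finset V → ℝ}
    (hh : ∀ σ, 0 ≤ h σ) :
    ∑ τ ∈ T, ∑ v ∈ τ, h (τ.erase v) / missingCount c (τ.erase v) ≤ ∑ σ ∈ faces X k, h σ := by
  calc ∑ τ ∈ T, ∑ v ∈ τ, h (τ.erase v) / missingCount c (τ.erase v)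
      = ∑ τ ∈ T, ∑ σ ∈ faces X k with σ ⊆ τ, h σ / missingCount c σ :=
        sum_congr rfl fun τ hτ => sum_erase_eq_sum_faces X (hT τ hτ).1.card_eq (hT τ hτ).2
          fun σ => h σ / missingCount c σ
    _ = ∑ σ ∈ faces X k, ∑ τ ∈ T with σ ⊆ τ, h σ / missingCount c σ :=
        sum_comm' fun τ σ => by simp only [mem_filter]; tauto
    _ = ∑ σ ∈ faces X k, #{τ ∈ T | σ ⊆ τ} * (h σ / missingCount c σ) := by
        simp only [sum_const, nsmul_eq_mul]
    _ ≤ ∑ σ ∈ faces X k, h σ := sum_le_sum fun σ hσ => ?_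
  have hcount : (#{τ ∈ T | σ ⊆ τ} : ℝ) ≤ missingCount c σ := by
    refine Nat.cast_le.mpr (card_filter_superset_le_missingCount fun τ hτ => ⟨(hT τ hτ).1, ?_⟩)
    rw [(hT τ hτ).1.card_eq, (mem_filter.mp hσ).2]
  rcases (Nat.cast_nonneg (α := ℝ) (missingCount c σ)).eq_or_lt with hzero | hpos
  · rw [← hzero, div_zero, mul_zero]
    exact hh σ
  · calc _ ≤ (missingCount c σ : ℝ) * (h σ / missingCount c σ) :=
          mul_le_mul_of_nonneg_right hcount (div_nonneg (hh σ) hpos.le)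
      _ = h σ := mul_div_cancel₀ _ hpos.ne'

theorem card_mul_card_le_inn [LinearOrder V] (X : Finset (Finset V)) {T : Finset (Finset V)}
    (hT : ∀ τ ∈ T, IsRainbow c τ ∧ ∀ v ∈ τ, τ.erase v ∈ X) {f : Finset V → ℝ}
    (hf : ∀ τ ∈ T, delta X k f τ ^ 2 = (Fintype.card V : ℝ) ^ 2) :
    (Fintype.card V : ℝ) * #T ≤ inn X k f f := by
  rcases (Nat.cast_nonneg (α := ℝ) (Fintype.card V)).eq_or_lt with hzero | hpos
  · rw [← hzero, zero_mul]
    exact inn_self_nonneg X k f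
  have hface : ∀ τ ∈ T,
      (Fintype.card V : ℝ) ≤ ∑ v ∈ τ, f (τ.erase v) ^ 2 / missingCount c (τ.erase v) :=
    fun τ hτ => le_of_mul_le_mul_left (by
      rw [← sq, ← hf τ hτ]; exact (hT τ hτ).1.sq_delta_le X (hT τ hτ).2 f) hpos
  calc (Fintype.card V : ℝ) * #T = ∑ _τ ∈ T, (Fintype.card V : ℝ) := by
        rw [sum_const, nsmul_eq_mul, mul_comm]
    _ ≤ ∑ τ ∈ T, ∑ v ∈ τ, f (τ.erase v) ^ 2 / missingCount c (τ.erase v) := sum_le_sum hface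
    _ ≤ ∑ σ ∈ faces X k, f σ ^ 2 := sum_sum_erase_div_missingCount_le X hT fun σ => sq_nonneg _
    _ = inn X k f f := by simp only [inn, sq]

end Estimate

section Cheeger

variable {V : Type*} [DecidableEq V] [LinearOrder V] [Fintype V]

theorem exists_isCycle_rayleigh_le {X : Finset (Finset V)} (hX : IsComplex X) {k : ℕ}
    (c : V → Fin (k + 1)) (hT : {τ ∈ faces (completion X k) (k + 1) | IsRainbow c τ}.Nonempty) :
    ∃ f, IsCycle X k f ∧ inn X k f f ≠ 0 ∧
      inn X k (lapUp X k f) f / inn X k f f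
        ≤ Fintype.card V * #{τ ∈ faces X (k + 1) | IsRainbow c τ}
          / #{τ ∈ faces (completion X k) (k + 1) | IsRainbow c τ} := by
  set n : ℝ := (Fintype.card V : ℝ)
  set F := {τ ∈ faces X (k + 1) | IsRainbow c τ}
  set T := {τ ∈ faces (completion X k) (k + 1) | IsRainbow c τ}
  have hsum : ∑ i, (#{x | c x = i} : ℝ) = n := by
    rw [← Nat.cast_sum, ← card_eq_sum_card_fiberwise fun _ _ => mem_univ _, card_univ]
  obtain ⟨f, hcycle, hδf⟩ := exists_isCycle_delta_eq X k (testCochain c fun i => #{x | c x = i})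
  have hsq : ∀ τ ∈ faces (completion X k) (k + 1),
      delta X k f τ ^ 2 = if IsRainbow c τ then n ^ 2 else 0 := by
    intro τ hτ
    obtain ⟨hτK, hcard⟩ := mem_filter.mp hτ
    have hfacets := hX.erase_mem_of_mem_completion hτK
    rw [hδf τ hcard hfacets, delta_testCochain _ X hcard hfacets, hsum]
    split_ifs
    · rw [mul_pow, ← pow_mul, pow_mul', neg_one_sq, one_pow, one_mul]
    · exact zero_pow two_ne_zero
  have hnum : inn X k (lapUp X k f) f = n ^ 2 * #F := by
    have hsub : faces X (k + 1) ⊆ faces (completion X k) (k + 1) :=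
      filter_subset_filter _ subset_union_left
    rw [inn_lapUp_self, inn, sum_congr rfl fun τ hτ => by rw [← sq, hsq τ (hsub hτ)],
      ← sum_filter, sum_const, nsmul_eq_mul, mul_comm]
  have hden : n * #T ≤ inn X k f f :=
    card_mul_card_le_inn X
      (fun τ hτ => ⟨(mem_filter.mp hτ).2,
        hX.erase_mem_of_mem_completion (mem_filter.mp (mem_filter.mp hτ).1).1⟩)
      (fun τ hτ => by rw [hsq τ (mem_filter.mp hτ).1, if_pos (mem_filter.mp hτ).2])
  obtain ⟨τ, hτ⟩ := hT
  obtain ⟨v, -⟩ := card_pos.mp (by rw [(mem_filter.mp hτ).2.card_eq]; exact k.succ_pos)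
  have hn : 0 < n := Nat.cast_pos.mpr (Fintype.card_pos_iff.mpr ⟨v⟩)
  have hpos : 0 < n * #T := mul_pos hn (Nat.cast_pos.mpr (card_pos.mpr ⟨τ, hτ⟩))
  refine ⟨f, hcycle, (hpos.trans_le hden).ne', ?_⟩
  rw [hnum]
  calc _ ≤ n ^ 2 * #F / (n * #T) := div_le_div_of_nonneg_left (by positivity) hpos hden
    _ = n * #F / #T := by rw [sq, mul_assoc, mul_div_mul_left _ _ hn.ne']

end Cheeger

theorem spectralGap_le_cheeger_general
    {V : Type*} [DecidableEq V] [Fintype V] [LinearOrder V]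
    (X : Finset (Finset V)) (k : ℕ)
    (hX : IsComplex X) :
    (spectralGap X k : EReal) ≤ cheeger X k := by
  refine le_sInf ?_
  rintro _ ⟨A, hA, rfl⟩
  obtain ⟨c, rfl⟩ := hA.exists_eq_fiber
  simp only [cheegerVal, Fset, Fpar, card_inter_fiber_eq_one_iff]
  split_ifs with hT
  · exact le_top
  obtain ⟨f, hcycle, hff, hle⟩ :=
    exists_isCycle_rayleigh_le hX c (card_pos.mp (Nat.pos_of_ne_zero hT))
  exact EReal.coe_le_coe_iff.mpr ((spectralGap_le hcycle hff).trans hle)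

/-- For **any** `k`-dimensional simplicial complex `X` (with not necessarily complete
`(k-1)`-skeleton) with `Z_{k-1}(X;ℝ) ≠ 0`, one has `λ(X) ≤ h(X)`. -/
theorem spectralGap_le_cheeger
    {V : Type*} [DecidableEq V] [Fintype V] [LinearOrder V]
    (X : Finset (Finset V)) (k : ℕ)
    (hX : IsComplex X) (hdim : IsDim X k)
    (hZ : ∃ f : Finset V → ℝ, IsCycle X k f ∧ inn X k f f ≠ 0) :
    (spectralGap X k : EReal) ≤ cheeger X k :=
  spectralGap_le_cheeger_general X k hX

end HigherCheeger
end

section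
/- Let X be a k-dimensional simplicial complex on a finite vertex set V with complete (k−1)-skeleton, let V = A_0 ⊔ … ⊔ A_k be a partition into nonempty parts, and let f ∈ C^{k−1}(X;ℝ) be the associated cochain (with the partition-adapted linear order on V). Then ∂_{k−1}f = 0, i.e. f ∈ Z_{k−1}(X;ℝ), and ⟨f,f⟩ = |V|·|A_0|·|A_1|···|A_k| = |V|·|F^∂(A_0,…,A_k)|. -/
open Finset

namespace HigherCheeger

variable {V : Type*} [DecidableEq V] [Fintype V] [LinearOrder V]

/-!
Encode the partition by its index map `p : V → Fin (k + 1)`; adaptedness of the order makes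
`p` monotone, and `assocCochain` only depends on the set `τ.image p` of parts met by `τ`.

A `k`-set `τ` has `f τ ≠ 0` exactly when it is a transversal of all parts but one, `A_l`, and then
`f τ ^ 2 = |A_l| ^ 2`. There are `∏_{i ≠ l} |A_i|` such transversals, so
`⟨f, f⟩ = ∑_l |A_l| ∏_i |A_i| = |V| ∏_i |A_i|`; the same count of full transversals gives
`|F^∂|`, since the complete `(k-1)`-skeleton puts every `(k+1)`-set into `K(X)`.

For a `(k-1)`-set `σ`, `∂f(σ)` is a signed sum over the vertices `v ∉ σ`. It vanishes termwise
unless `σ` misses exactly two parts `A_l`, `A_m` (`l < m`), meeting each other part once. Then only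
`v ∈ A_l ∪ A_m` contribute: such `v` sits at position `l`, resp. `m - 1`, in `insert v σ`, giving
`|A_l| (-1)^l (-1)^m |A_m| + |A_m| (-1)^(m-1) (-1)^l |A_l| = 0`.
-/

section Fibers

variable {V ι : Type*} [Fintype V]

def fibers [DecidableEq ι] (p : V → ι) (i : ι) : Finset V :=
  univ.filter fun v => p v = i

@[simp]
lemma mem_fibers [DecidableEq ι] {p : V → ι} {i : ι} {v : V} : v ∈ fibers p i ↔ p v = i := by
  simp [fibers]

lemma IsPartition.exists_eq_fibers {m : ℕ} {A : Fin m → Finset V} (hA : IsPartition A) :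
    ∃ p : V → Fin m, A = fibers p := by
  choose p hp using fun v => (hA.2 v).exists
  refine ⟨p, funext fun i => Finset.ext fun v => ?_⟩
  rw [mem_fibers]
  exact ⟨fun h => (hA.2 v).unique (hp v) h, fun h => h ▸ hp v⟩

lemma monotone_of_orderAdapted_fibers [LinearOrder V] {m : ℕ} {p : V → Fin m}
    (h : OrderAdapted (fibers p)) : Monotone p :=
  fun v w hvw => not_lt.1 fun hlt =>
    (h _ _ hlt w (mem_fibers.2 rfl) v (mem_fibers.2 rfl)).not_ge hvw

variable [DecidableEq V] [DecidableEq ι]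

lemma inter_fibers_eq_empty_iff {p : V → ι} {σ : Finset V} {i : ι} :
    σ ∩ fibers p i = ∅ ↔ i ∉ σ.image p := by
  simp [eq_empty_iff_forall_notMem]

lemma fibers_subset_compl {p : V → ι} {σ : Finset V} {i : ι} (h : i ∉ σ.image p) :
    fibers p i ⊆ σᶜ :=
  fun _ hv => mem_compl.2 fun hvσ => h (mem_fibers.1 hv ▸ mem_image_of_mem p hvσ)

lemma card_filter_injOn_image_eq (p : V → ι) (S : Finset ι) :
    #(univ.filter fun τ : Finset V => Set.InjOn p τ ∧ τ.image p = S) = ∏ i ∈ S, #(fibers p i) := by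
  rw [← card_pi]
  symm
  refine card_bij (fun g _ => S.attach.image fun i => g i.1 i.2) (fun g hg => ?_)
    (fun g₁ hg₁ g₂ hg₂ h => ?_) (fun τ hτ => ?_)
  · have hpg : ∀ i hi, p (g i hi) = i := fun i hi => mem_fibers.1 (mem_pi.1 hg i hi)
    refine mem_filter.2 ⟨mem_univ _, ?_, ?_⟩
    · rw [coe_image]
      rintro _ ⟨i, -, rfl⟩ _ ⟨j, -, rfl⟩ hij
      rw [hpg, hpg] at hij
      rw [Subtype.ext hij]
    · ext i
      simp [hpg]
  · have hpg₁ : ∀ i hi, p (g₁ i hi) = i := fun i hi => mem_fibers.1 (mem_pi.1 hg₁ i hi)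
    have hpg₂ : ∀ i hi, p (g₂ i hi) = i := fun i hi => mem_fibers.1 (mem_pi.1 hg₂ i hi)
    funext i hi
    obtain ⟨⟨j, hj⟩, -, hji⟩ := mem_image.1 (h ▸ mem_image_of_mem _ (mem_attach _ ⟨i, hi⟩))
    obtain rfl : j = i := by rw [← hpg₂ j hj, hji, hpg₁]
    exact hji.symm
  · obtain ⟨hinj, himg⟩ := (mem_filter.1 hτ).2
    choose g hgτ hgp using fun i (hi : i ∈ S) => mem_image.1 (himg ▸ hi)
    refine ⟨g, mem_pi.2 fun i hi => mem_fibers.2 (hgp i hi), ?_⟩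
    ext v
    simp only [mem_image, mem_attach, true_and, Subtype.exists]
    refine ⟨fun ⟨i, hi, hv⟩ => hv ▸ hgτ i hi, fun hv => ?_⟩
    have hpv : p v ∈ S := himg ▸ mem_image_of_mem p hv
    exact ⟨p v, hpv, hinj (hgτ _ hpv) hv (hgp _ hpv)⟩

lemma forall_card_inter_fibers_eq_one_iff [Fintype ι] {p : V → ι} {τ : Finset V} :
    (∀ i, #(τ ∩ fibers p i) = 1) ↔ Set.InjOn p τ ∧ τ.image p = univ := by
  refine ⟨fun h => ⟨fun x hx y hy hxy => ?_, eq_univ_of_forall fun i => ?_⟩,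
    fun ⟨hinj, himg⟩ i => ?_⟩
  · exact card_le_one.1 (h (p x)).le x (by simp [mem_coe.1 hx]) y (by simp [mem_coe.1 hy, hxy])
  · obtain ⟨v, hv⟩ := card_pos.1 (by rw [h i]; exact one_pos)
    simp only [mem_inter, mem_fibers] at hv
    exact mem_image.2 ⟨v, hv⟩
  · have hpos : 0 < #(τ ∩ fibers p i) := by
      obtain ⟨v, hv, rfl⟩ := mem_image.1 (himg ▸ mem_univ i)
      exact card_pos.2 ⟨v, by simp [hv]⟩
    have hle : #(τ ∩ fibers p i) ≤ 1 := card_le_one.2 fun x hx y hy => by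
      simp only [mem_inter, mem_fibers] at hx hy
      exact hinj hx.1 hy.1 (hx.2.trans hy.2.symm)
    omega

end Fibers

section AssocCochain

variable {V : Type*} [Fintype V] {k : ℕ}

lemma faces_eq_powersetCard {X : Finset (Finset V)} (hskel : CompleteSkeleton X k) :
    faces X k = powersetCard k univ := by
  ext σ
  simp only [faces, mem_filter, mem_powersetCard, subset_univ, true_and]
  exact ⟨fun h => h.2, fun h => ⟨hskel σ h.le, h⟩⟩

variable [DecidableEq V]

lemma filter_inter_fibers_eq_empty (p : V → Fin (k + 1)) (σ : Finset V) :
    (univ.filter fun l => σ ∩ fibers p l = ∅) = (σ.image p)ᶜ := by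
  ext l
  simp [inter_fibers_eq_empty_iff]

lemma assocCochain_fibers_of_compl_image_eq {p : V → Fin (k + 1)} {σ : Finset V} {l : Fin (k + 1)}
    (h : (σ.image p)ᶜ = {l}) : assocCochain (fibers p) σ = (-1) ^ (l : ℕ) * #(fibers p l) := by
  rw [assocCochain, filter_inter_fibers_eq_empty, h, if_pos (card_singleton l), sum_singleton]

lemma assocCochain_fibers_of_card_compl_image_ne_one {p : V → Fin (k + 1)} {σ : Finset V}
    (h : #(σ.image p)ᶜ ≠ 1) : assocCochain (fibers p) σ = 0 := by
  rw [assocCochain, filter_inter_fibers_eq_empty, if_neg h]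

lemma assocCochain_fibers_mul_self (p : V → Fin (k + 1)) (σ : Finset V) :
    assocCochain (fibers p) σ * assocCochain (fibers p) σ =
      ∑ l, if (σ.image p)ᶜ = {l} then (#(fibers p l) : ℝ) ^ 2 else 0 := by
  by_cases h : #(σ.image p)ᶜ = 1
  · obtain ⟨l, hl⟩ := card_eq_one.1 h
    simp only [assocCochain_fibers_of_compl_image_eq hl, hl, singleton_inj, sum_ite_eq,
      mem_univ, if_true]
    rw [mul_mul_mul_comm, ← pow_add, ← two_mul, pow_mul, neg_one_sq, one_pow, one_mul, sq]
  · rw [assocCochain_fibers_of_card_compl_image_ne_one h, mul_zero]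
    exact (sum_eq_zero fun l _ => if_neg fun hl => h (by rw [hl, card_singleton])).symm

lemma card_powersetCard_filter_compl_image_eq (p : V → Fin (k + 1)) (l : Fin (k + 1)) :
    #((powersetCard k univ).filter fun τ => (τ.image p)ᶜ = {l}) = ∏ i ∈ {l}ᶜ, #(fibers p i) := by
  have hk : #({l}ᶜ : Finset (Fin (k + 1))) = k := by simp [card_compl]
  rw [← card_filter_injOn_image_eq]
  congr 1
  ext τ
  simp only [mem_filter, mem_powersetCard, subset_univ, true_and, mem_univ]
  rw [compl_eq_comm]
  constructor
  · rintro ⟨hτ, himg⟩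
    exact ⟨card_image_iff.1 (by rw [← himg, hk, hτ]), himg.symm⟩
  · rintro ⟨hinj, himg⟩
    exact ⟨by rw [← card_image_of_injOn hinj, himg, hk], himg.symm⟩

lemma inn_assocCochain_fibers {X : Finset (Finset V)} (hskel : CompleteSkeleton X k)
    (p : V → Fin (k + 1)) :
    inn X k (assocCochain (fibers p)) (assocCochain (fibers p))
      = Fintype.card V * ∏ i, (#(fibers p i) : ℝ) := by
  calc inn X k (assocCochain (fibers p)) (assocCochain (fibers p))
      = ∑ τ ∈ powersetCard k univ, ∑ l,
          if (τ.image p)ᶜ = {l} then (#(fibers p l) : ℝ) ^ 2 else 0 := by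
        rw [inn, faces_eq_powersetCard hskel]
        exact sum_congr rfl fun τ _ => assocCochain_fibers_mul_self p τ
    _ = ∑ l, (#(fibers p l) : ℝ) * (#(fibers p l) * ∏ i ∈ univ.erase l, (#(fibers p i) : ℝ)) := by
        rw [sum_comm]
        refine sum_congr rfl fun l _ => ?_
        rw [← sum_filter, sum_const, card_powersetCard_filter_compl_image_eq, compl_singleton,
          nsmul_eq_mul, Nat.cast_prod]
        ring
    _ = Fintype.card V * ∏ i, (#(fibers p i) : ℝ) := by
        simp_rw [mul_prod_erase univ (fun i => (#(fibers p i) : ℝ)) (mem_univ _)]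
        rw [← sum_mul, ← Nat.cast_sum, ← card_univ,
          card_eq_sum_card_fiberwise (f := p) (t := univ) fun _ _ => mem_coe.2 (mem_univ _)]
        rfl

lemma card_Fpar_fibers {X : Finset (Finset V)} (hskel : CompleteSkeleton X k)
    (p : V → Fin (k + 1)) : #(Fpar X k (fibers p)) = ∏ i, #(fibers p i) := by
  rw [← card_filter_injOn_image_eq]
  congr 1
  ext τ
  simp only [Fpar, faces, completion, mem_filter, mem_union, mem_univ, true_and,
    forall_card_inter_fibers_eq_one_iff]
  refine ⟨fun h => h.2, fun h => ?_⟩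
  have hcard : #τ = k + 1 := by
    rw [← card_image_of_injOn h.1, h.2, card_univ, Fintype.card_fin]
  refine ⟨⟨Or.inr ⟨hcard, fun v hv => hskel _ ?_⟩, hcard⟩, h⟩
  rw [card_erase_of_mem hv, hcard, Nat.add_sub_cancel]

end AssocCochain

section Boundary

variable {V : Type*} [DecidableEq V] [LinearOrder V]

lemma incidence_insert_self {σ : Finset V} {v : V} (hv : v ∉ σ) :
    incidence (insert v σ) σ = (-1) ^ #{w ∈ σ | w < v} := by
  rw [incidence, if_pos ⟨subset_insert v σ, (card_insert_of_notMem hv).symm⟩,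
    insert_sdiff_cancel hv, sum_singleton, filter_insert, if_neg (lt_irrefl v)]

lemma incidence_eq_zero {σ τ : Finset V} (h : ∀ v ∉ σ, insert v σ ≠ τ) : incidence τ σ = 0 := by
  rw [incidence, if_neg]
  rintro ⟨hsub, hcard⟩
  obtain ⟨v, hv⟩ := card_eq_one.1 (by rw [card_sdiff_of_subset hsub]; omega : #(τ \ σ) = 1)
  refine h v (mem_sdiff.1 (hv ▸ mem_singleton_self v)).2 ?_
  rw [insert_eq, ← hv, sdiff_union_of_subset hsub]

lemma bdry_eq_zero_of_card_add_one_ne {X : Finset (Finset V)} {k : ℕ} {σ : Finset V}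
    (hσ : #σ + 1 ≠ k) (g : Finset V → ℝ) : bdry X k g σ = 0 :=
  sum_eq_zero fun τ hτ => by
    rw [incidence, if_neg fun h => hσ (h.2.trans (mem_filter.1 hτ).2), zero_mul]

lemma bdry_eq_sum_insert [Fintype V] {X : Finset (Finset V)} {k : ℕ}
    (hskel : CompleteSkeleton X k) {σ : Finset V} (hσ : #σ + 1 = k) (g : Finset V → ℝ) :
    bdry X k g σ = ∑ v ∈ σᶜ, (-1) ^ #{w ∈ σ | w < v} * g (insert v σ) := by
  have hins : ∀ v ∈ σᶜ, insert v σ ∈ faces X k := fun v hv => by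
    have hcard : #(insert v σ) = k := by rw [card_insert_of_notMem (mem_compl.1 hv), hσ]
    exact mem_filter.2 ⟨hskel _ hcard.le, hcard⟩
  have hinj : Set.InjOn (insert · σ) ↑(σᶜ) := fun v hv w _ h =>
    (insert_inj (mem_compl.1 hv)).1 h
  rw [bdry, ← sum_subset (image_subset_iff.2 hins), sum_image hinj]
  · exact sum_congr rfl fun v hv => by rw [incidence_insert_self (mem_compl.1 hv)]
  · intro τ _ hτ
    rw [incidence_eq_zero fun v hv h => hτ (mem_image.2 ⟨v, mem_compl.2 hv, h⟩), zero_mul]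

end Boundary

lemma card_filter_lt_eq_card_filter_image_lt {V ι : Type*} [LinearOrder V] [LinearOrder ι]
    {p : V → ι} (hp : Monotone p) {σ : Finset V} (hinj : Set.InjOn p σ) {v : V}
    (hv : p v ∉ σ.image p) :
    #{w ∈ σ | w < v} = #{i ∈ σ.image p | i < p v} := by
  have hlt : ∀ w ∈ σ, w < v ↔ p w < p v := fun w hw =>
    ⟨fun h => (hp h.le).lt_of_ne fun he => hv (he ▸ mem_image_of_mem p hw), hp.reflect_lt⟩
  rw [filter_congr hlt, filter_image, card_image_of_injOn (hinj.mono (filter_subset _ _))]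

lemma card_filter_compl_pair_lt_left {n : ℕ} {l m : Fin n} (hlm : l < m) :
    #{i ∈ ({l, m}ᶜ : Finset (Fin n)) | i < l} = l := by
  rw [← Fin.card_Iio l]
  congr 1
  ext i
  simp only [mem_filter, mem_compl, mem_insert, mem_singleton, mem_Iio]
  grind

lemma card_filter_compl_pair_lt_right {n : ℕ} {l m : Fin n} (hlm : l < m) :
    #{i ∈ ({l, m}ᶜ : Finset (Fin n)) | i < m} = m - 1 := by
  rw [← Fin.card_Iio m, ← card_erase_of_mem (mem_Iio.2 hlm)]
  congr 1
  ext i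
  simp only [mem_filter, mem_compl, mem_insert, mem_singleton, mem_Iio, mem_erase]
  grind

section Cycle

variable {V : Type*} [DecidableEq V] [Fintype V] [LinearOrder V] {k : ℕ}

lemma sum_insert_assocCochain_fibers_eq_zero_of_compl_image_eq_pair {p : V → Fin (k + 1)}
    (hp : Monotone p) {σ : Finset V} (hσ : #σ + 1 = k) {l m : Fin (k + 1)} (hlm : l < m)
    (hlmM : (σ.image p)ᶜ = {l, m}) :
    ∑ v ∈ σᶜ, (-1 : ℝ) ^ #{w ∈ σ | w < v} * assocCochain (fibers p) (insert v σ) = 0 := by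
  have hcompl : ∀ v, ((insert v σ).image p)ᶜ = ({l, m} : Finset _).erase (p v) := fun v => by
    rw [image_insert, compl_insert, hlmM]
  have himg : σ.image p = {l, m}ᶜ := by rw [← hlmM, compl_compl]
  have hinj : Set.InjOn p σ := card_image_iff.1 <| by
    rw [himg, card_compl, card_pair hlm.ne, Fintype.card_fin]
    omega
  have hsign : ∀ v, p v ∈ ({l, m} : Finset _) →
      #{w ∈ σ | w < v} = #{i ∈ ({l, m}ᶜ : Finset _) | i < p v} := fun v hv => by
    rw [card_filter_lt_eq_card_filter_image_lt hp hinj (by rw [himg, mem_compl, not_not]; exact hv),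
      himg]
  have hsub : fibers p l ∪ fibers p m ⊆ σᶜ :=
    union_subset (fibers_subset_compl (by simp [himg])) (fibers_subset_compl (by simp [himg]))
  rw [← sum_subset hsub fun v _ hv => ?_, sum_union (disjoint_left.2 fun v hl hm => hlm.ne
    ((mem_fibers.1 hl).symm.trans (mem_fibers.1 hm)))]
  · have hl : ∀ v ∈ fibers p l, (-1 : ℝ) ^ #{w ∈ σ | w < v} * assocCochain (fibers p) (insert v σ)
        = (-1) ^ (l : ℕ) * ((-1) ^ (m : ℕ) * #(fibers p m)) := fun v hv => by
      rw [mem_fibers] at hv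
      rw [hsign v (by simp [hv]), hv, card_filter_compl_pair_lt_left hlm,
        assocCochain_fibers_of_compl_image_eq (by rw [hcompl, hv, erase_insert_eq_erase,
          erase_eq_of_notMem (by simpa using hlm.ne)])]
    have hm : ∀ v ∈ fibers p m, (-1 : ℝ) ^ #{w ∈ σ | w < v} * assocCochain (fibers p) (insert v σ)
        = (-1) ^ ((m : ℕ) - 1) * ((-1) ^ (l : ℕ) * #(fibers p l)) := fun v hv => by
      rw [mem_fibers] at hv
      rw [hsign v (by simp [hv]), hv, card_filter_compl_pair_lt_right hlm,
        assocCochain_fibers_of_compl_image_eq (by rw [hcompl, hv, pair_comm,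
          erase_insert_eq_erase, erase_eq_of_notMem (by simpa using hlm.ne')])]
    rw [sum_congr rfl hl, sum_congr rfl hm, sum_const, sum_const, nsmul_eq_mul, nsmul_eq_mul]
    obtain ⟨n, hn⟩ : ∃ n, (m : ℕ) = n + 1 := ⟨m - 1, by omega⟩
    rw [hn, Nat.add_sub_cancel, pow_succ]
    ring
  · rw [assocCochain_fibers_of_card_compl_image_ne_one, mul_zero]
    rw [hcompl, erase_eq_of_notMem (by simpa [or_comm] using hv), card_pair hlm.ne]
    omega

lemma sum_insert_assocCochain_fibers_eq_zero {p : V → Fin (k + 1)} (hp : Monotone p)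
    {σ : Finset V} (hσ : #σ + 1 = k) :
    ∑ v ∈ σᶜ, (-1 : ℝ) ^ #{w ∈ σ | w < v} * assocCochain (fibers p) (insert v σ) = 0 := by
  have hM2 : 2 ≤ #(σ.image p)ᶜ := by
    have := card_image_le (s := σ) (f := p)
    rw [card_compl, Fintype.card_fin]
    omega
  by_cases hM : #(σ.image p)ᶜ = 2
  · obtain ⟨a, b, hab, h⟩ := card_eq_two.1 hM
    rcases hab.lt_or_gt with hab | hab
    · exact sum_insert_assocCochain_fibers_eq_zero_of_compl_image_eq_pair hp hσ hab h
    · rw [pair_comm] at h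
      exact sum_insert_assocCochain_fibers_eq_zero_of_compl_image_eq_pair hp hσ hab h
  · refine sum_eq_zero fun v _ => ?_
    have := pred_card_le_card_erase (s := (σ.image p)ᶜ) (a := p v)
    rw [assocCochain_fibers_of_card_compl_image_ne_one (by rw [image_insert, compl_insert]; omega),
      mul_zero]

lemma isCycle_assocCochain_fibers {X : Finset (Finset V)} (hskel : CompleteSkeleton X k)
    {p : V → Fin (k + 1)} (hp : Monotone p) : IsCycle X k (assocCochain (fibers p)) := fun σ => by
  by_cases hσ : #σ + 1 = k
  · rw [bdry_eq_sum_insert hskel hσ]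
    exact sum_insert_assocCochain_fibers_eq_zero hp hσ
  · exact bdry_eq_zero_of_card_add_one_ne hσ _

end Cycle

theorem assocCochain_isCycle_and_norm_general
    {V : Type*} [DecidableEq V] [Fintype V] [LinearOrder V]
    (X : Finset (Finset V)) (k : ℕ)
    (hskel : CompleteSkeleton X k)
    (A : Fin (k + 1) → Finset V) (hA : IsPartition A) (hord : OrderAdapted A) :
    IsCycle X k (assocCochain A) ∧
      inn X k (assocCochain A) (assocCochain A)
        = (Fintype.card V : ℝ) * ∏ i, ((A i).card : ℝ) ∧
      inn X k (assocCochain A) (assocCochain A)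
        = (Fintype.card V : ℝ) * ((Fpar X k A).card : ℝ) := by
  obtain ⟨p, rfl⟩ := hA.exists_eq_fibers
  have hnorm := inn_assocCochain_fibers hskel p
  refine ⟨isCycle_assocCochain_fibers hskel (monotone_of_orderAdapted_fibers hord), hnorm, ?_⟩
  rw [hnorm, card_Fpar_fibers hskel, Nat.cast_prod]

/-- **Lemma 1.5 (Parzanchevski et al.).**  Let `X` be a `k`-dimensional complex with
complete `(k-1)`-skeleton, `A` a partition of `V` into `k+1` nonempty parts and `f` the
associated cochain (w.r.t. a partition-adapted order).  Then `f ∈ Z_{k-1}(X;ℝ)` and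
`⟨f,f⟩ = |V|·|A_0|·…·|A_k| = |V|·|F^∂(A_0,…,A_k)|`. -/
theorem assocCochain_isCycle_and_norm
    {V : Type*} [DecidableEq V] [Fintype V] [LinearOrder V]
    (X : Finset (Finset V)) (k : ℕ)
    (hX : IsComplex X) (hdim : IsDim X k) (hskel : CompleteSkeleton X k)
    (A : Fin (k + 1) → Finset V) (hA : IsPartition A) (hord : OrderAdapted A) :
    IsCycle X k (assocCochain A) ∧
      inn X k (assocCochain A) (assocCochain A)
        = (Fintype.card V : ℝ) * ∏ i, ((A i).card : ℝ) ∧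
      inn X k (assocCochain A) (assocCochain A)
        = (Fintype.card V : ℝ) * ((Fpar X k A).card : ℝ) :=
  assocCochain_isCycle_and_norm_general X k hskel A hA hord

end HigherCheeger
end
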